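/- Let A and B be positive self-adjoint bounded operators on a Hilbert space and a ∈ [0, 1]. Then ‖A^a B^a‖ ≤ ‖A B‖^a (Cordes inequality), in the special case a = 1/2: ‖A^{1/2} B^{1/2}‖² ≤ ‖A B‖. -/

import Mathlib

/-!
With `T = √a √b` the C⋆-identity gives `‖T‖² = ‖T⋆T‖ = ‖√b a √b‖`. The element `√b a √b` is
self-adjoint, so its norm is its spectral radius, and `xy` and `yx` have the same nonzero
spectrum, so this equals the spectral radius of `a √b √b = a b`, which is at most `‖a b‖`.
-/

open scoped NNReal ENNReal

theorem spectralRadius_eq_biSup_diff_zero {𝕜 A : Type*} [NormedField 𝕜] [Ring A]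
    [Algebra 𝕜 A] (a : A) : spectralRadius 𝕜 a = ⨆ k ∈ spectrum 𝕜 a \ {0}, (‖k‖₊ : ℝ≥0∞) := by
  refine le_antisymm (iSup₂_le fun k hk => ?_) (biSup_mono fun _ hk => hk.1)
  rcases eq_or_ne k 0 with rfl | hk0
  · simp
  · exact le_iSup₂_of_le (f := fun k _ => (‖k‖₊ : ℝ≥0∞)) k ⟨hk, hk0⟩ le_rfl

theorem spectralRadius_mul_comm {𝕜 A : Type*} [NormedField 𝕜] [Ring A]
    [Algebra 𝕜 A] (a b : A) : spectralRadius 𝕜 (a * b) = spectralRadius 𝕜 (b * a) := by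
  rw [spectralRadius_eq_biSup_diff_zero, spectralRadius_eq_biSup_diff_zero,
    spectrum.nonzero_mul_comm]

namespace CStarAlgebra

variable {A : Type*} [CStarAlgebra A] [PartialOrder A] [StarOrderedRing A] {a b : A}

theorem star_sqrt_mul_sqrt_mul_self (ha : 0 ≤ a) (b : A) :
    star (CFC.sqrt a * CFC.sqrt b) * (CFC.sqrt a * CFC.sqrt b) = CFC.sqrt b * a * CFC.sqrt b := by
  rw [star_mul, (CFC.sqrt_nonneg a).isSelfAdjoint.star_eq,
    (CFC.sqrt_nonneg b).isSelfAdjoint.star_eq, mul_assoc,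
    ← mul_assoc (CFC.sqrt a), CFC.sqrt_mul_sqrt_self a ha, mul_assoc]

theorem nnnorm_sqrt_mul_sqrt_sq_le (ha : 0 ≤ a) (hb : 0 ≤ b) :
    ‖CFC.sqrt a * CFC.sqrt b‖₊ ^ 2 ≤ ‖a * b‖₊ := by
  nontriviality A
  have hconj : IsSelfAdjoint (CFC.sqrt b * a * CFC.sqrt b) :=
    (CFC.sqrt_nonneg b).isSelfAdjoint.conjugate_nonneg ha |>.isSelfAdjoint
  rw [← ENNReal.coe_le_coe]
  calc ((‖CFC.sqrt a * CFC.sqrt b‖₊ ^ 2 : ℝ≥0) : ℝ≥0∞)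
      = ‖CFC.sqrt b * a * CFC.sqrt b‖₊ := by
        rw [sq, ← CStarRing.nnnorm_star_mul_self, star_sqrt_mul_sqrt_mul_self ha]
    _ = spectralRadius ℂ (CFC.sqrt b * a * CFC.sqrt b) := hconj.spectralRadius_eq_nnnorm.symm
    _ = spectralRadius ℂ (a * b) := by
        rw [mul_assoc, spectralRadius_mul_comm, mul_assoc, CFC.sqrt_mul_sqrt_self b hb]
    _ ≤ ‖a * b‖₊ := spectrum.spectralRadius_le_nnnorm _

theorem norm_sqrt_mul_sqrt_sq_le (ha : 0 ≤ a) (hb : 0 ≤ b) :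
    ‖CFC.sqrt a * CFC.sqrt b‖ ^ 2 ≤ ‖a * b‖ :=
  mod_cast nnnorm_sqrt_mul_sqrt_sq_le ha hb

end CStarAlgebra

/-- Cordes inequality, case `a = 1/2`: for positive (self-adjoint) bounded operators
`A`, `B` on a Hilbert space, `‖A^{1/2} B^{1/2}‖² ≤ ‖A B‖`. -/
theorem cordes_inequality_half {H : Type*} [NormedAddCommGroup H]
    [InnerProductSpace ℂ H] [CompleteSpace H]
    (A B : H →L[ℂ] H) (hA : 0 ≤ A) (hB : 0 ≤ B) :
    ‖CFC.sqrt A * CFC.sqrt B‖ ^ 2 ≤ ‖A * B‖ :=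
  CStarAlgebra.norm_sqrt_mul_sqrt_sq_le hA hB
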